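/- Let W ~ N(μ', Σ') where Σ' ∈ ℝ^{2d×2d} is symmetric idempotent of rank 2d−1, and let A be positive semi-definite. Write Σ' = BBᵀ with BᵀB = I_{2d−1}, let H be an orthogonal matrix with Hᵀ(BᵀAB)H = Diag(λ₁,…,λ_{2d−1}) where λ₁ ≥ … ≥ λ_r > 0 = λ_{r+1} = … = λ_{2d−1}, and set bᵀ = (μ')ᵀABH. Then WᵀAW has the same distribution as ∑_{j=1}^r λⱼ · χ²_{1,j}((bⱼ/λⱼ)²) + N(κ, ∑_{j>r} 4bⱼ²), where the χ²_{1,j}(νⱼ) are independent noncentral chi-squared random variables with one degree of freedom and noncentrality νⱼ = (bⱼ/λⱼ)², the Gaussian term is independent of them, and κ = (μ')ᵀAμ' − ∑_{j=1}^r bⱼ²/λⱼ. -/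

import Mathlib

open MeasureTheory ProbabilityTheory Matrix

/-- The law of i.i.d. standard normals indexed by `ι`. -/
noncomputable def stdGaussian (ι : Type*) [Fintype ι] : Measure (ι → ℝ) :=
  Measure.pi fun _ => gaussianReal 0 1

/-!
With `V = BH` we have `Σ' = VVᵀ`, so `Σ'y + μ' = V(Vᵀy) + μ'`, and `VᵀAV = Diag λ` turns the
quadratic form into `∑ λⱼ uⱼ² + 2 b·u + μ'ᵀAμ'` in the coordinates `u = Vᵀy`. Completing the
square on the coordinates with `λⱼ > 0` gives the stated function of `u`. Finally `VᵀV = I`, so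
`u = Vᵀy` is a centred Gaussian vector with identity covariance, i.e. again standard Gaussian.
-/

instance (ι : Type*) [Fintype ι] : IsProbabilityMeasure (_root_.stdGaussian ι) := by
  unfold _root_.stdGaussian
  infer_instance

namespace ProbabilityTheory

variable {E F : Type*} [NormedAddCommGroup E] [InnerProductSpace ℝ E] [FiniteDimensional ℝ E]
  [MeasurableSpace E] [BorelSpace E] [NormedAddCommGroup F] [InnerProductSpace ℝ F]
  [FiniteDimensional ℝ F] [MeasurableSpace F] [BorelSpace F]

lemma stdGaussian_map_of_comp_adjoint_eq_id (L : E →L[ℝ] F)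
    (hL : L ∘L L.adjoint = ContinuousLinearMap.id ℝ F) :
    (stdGaussian E).map L = stdGaussian F := by
  refine IsGaussian.ext ?_ ?_
  · simp [L.integral_id_map IsGaussian.integrable_id]
  · ext u v
    rw [covarianceBilin_map IsGaussian.memLp_two_id]
    simp only [covarianceBilin_stdGaussian, innerSL_apply_apply ℝ]
    rw [L.adjoint_inner_right, ← L.comp_apply, hL, ContinuousLinearMap.id_apply]

end ProbabilityTheory

lemma map_ofLp_stdGaussian (ι : Type*) [Fintype ι] :
    (ProbabilityTheory.stdGaussian (EuclideanSpace ℝ ι)).map WithLp.ofLp =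
      _root_.stdGaussian ι := by
  rw [← map_pi_eq_stdGaussian, Measure.map_map (by fun_prop) (by fun_prop)]
  exact Measure.map_id

lemma stdGaussian_map_mulVec {m n : Type*} [Fintype m] [Fintype n] [DecidableEq m]
    (M : Matrix m n ℝ) (hM : M * Mᵀ = 1) :
    (_root_.stdGaussian n).map M.mulVec = _root_.stdGaussian m := by
  classical
  set L := (toEuclideanLin M).toContinuousLinearMap
  have hL : L ∘L L.adjoint = ContinuousLinearMap.id ℝ _ := by
    ext u i
    simp [L, ← LinearMap.adjoint_toContinuousLinearMap, ← toEuclideanLin_conjTranspose_eq_adjoint,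
      mulVec_mulVec, hM]
  have hcomm : M.mulVec ∘ WithLp.ofLp = WithLp.ofLp ∘ L := by
    ext u i
    simp [L]
  rw [← map_ofLp_stdGaussian, ← map_ofLp_stdGaussian, Measure.map_map (by fun_prop) (by fun_prop),
    hcomm, ← Measure.map_map (by fun_prop) (by fun_prop),
    stdGaussian_map_of_comp_adjoint_eq_id L hL]

lemma dotProduct_mulVec_affine_eq_of_diagonal {ι κ : Type*} [Fintype ι] [Fintype κ] [DecidableEq κ]
    {A : Matrix ι ι ℝ} (hA : A.IsSymm) {V : Matrix ι κ ℝ} {lam : κ → ℝ}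
    (hV : Vᵀ * A * V = diagonal lam) (μ' : ι → ℝ) (u : κ → ℝ) :
    (V *ᵥ u + μ') ⬝ᵥ A *ᵥ (V *ᵥ u + μ') =
      ∑ j, lam j * u j ^ 2 + 2 * (vecMul μ' (A * V) ⬝ᵥ u) + μ' ⬝ᵥ A *ᵥ μ' := by
  have hquad : V *ᵥ u ⬝ᵥ A *ᵥ (V *ᵥ u) = ∑ j, lam j * u j ^ 2 := by
    rw [mulVec_mulVec, dotProduct_mulVec, ← vecMul_transpose, vecMul_vecMul, ← Matrix.mul_assoc, hV]
    simp [dotProduct, vecMul_diagonal, sq, mul_comm, mul_left_comm]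
  have hcross : V *ᵥ u ⬝ᵥ A *ᵥ μ' = vecMul μ' (A * V) ⬝ᵥ u := by
    rw [dotProduct_comm, dotProduct_mulVec, ← vecMul_transpose, hA.eq, vecMul_vecMul]
  have hcross' : μ' ⬝ᵥ A *ᵥ (V *ᵥ u) = vecMul μ' (A * V) ⬝ᵥ u := by
    rw [mulVec_mulVec, dotProduct_mulVec]
  rw [mulVec_add, dotProduct_add, add_dotProduct, add_dotProduct, hquad, hcross, hcross']
  ring

lemma sum_mul_sq_add_two_dotProduct_eq_completeSquare {κ : Type*} [Fintype κ]
    (p : κ → Prop) [DecidablePred p]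
    {lam : κ → ℝ} (hpos : ∀ j, p j → lam j ≠ 0) (hzero : ∀ j, ¬ p j → lam j = 0) (b u : κ → ℝ) :
    ∑ j, lam j * u j ^ 2 + 2 * (b ⬝ᵥ u) =
      ∑ j, (if p j then lam j * (u j + b j / lam j) ^ 2 else 2 * b j * u j) -
        ∑ j, (if p j then b j ^ 2 / lam j else 0) := by
  rw [← Finset.sum_sub_distrib, dotProduct, Finset.mul_sum, ← Finset.sum_add_distrib]
  refine Finset.sum_congr rfl fun j _ => ?_
  by_cases hj : p j
  · simp only [if_pos hj]
    field_simp [hpos j hj]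
    ring
  · simp only [if_neg hj, hzero j hj]
    ring

/-- The mixture `∑_{j≤r} λⱼ χ²_{1,j}((bⱼ/λⱼ)²) + N(κ, ∑_{j>r} 4bⱼ²)` is encoded as the law of
`y ↦ ∑_{j<r} λⱼ (yⱼ + bⱼ/λⱼ)² + ∑_{j≥r} 2 bⱼ yⱼ + κ` under `y ~ N(0, I_{2d−1})`, and `N(μ', Σ')`
as the law of `Σ'y + μ'` under `y ~ N(0, I_{2d})`. -/
theorem stmt_14_general {Ω : Type*} [MeasurableSpace Ω] (μ : Measure Ω)
    (d r : ℕ)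
    (S : Matrix (Fin (2 * d)) (Fin (2 * d)) ℝ)
    (A : Matrix (Fin (2 * d)) (Fin (2 * d)) ℝ) (hA : A.PosSemidef)
    (μ' : Fin (2 * d) → ℝ) (W : Ω → Fin (2 * d) → ℝ)
    (hW : μ.map W = (stdGaussian (Fin (2 * d))).map fun y => S.mulVec y + μ')
    (B : Matrix (Fin (2 * d)) (Fin (2 * d - 1)) ℝ) (hB1 : B * Bᵀ = S) (hB2 : Bᵀ * B = 1)
    (H : Matrix (Fin (2 * d - 1)) (Fin (2 * d - 1)) ℝ)
    (hH1 : Hᵀ * H = 1) (hH2 : H * Hᵀ = 1)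
    (lam : Fin (2 * d - 1) → ℝ)
    (hdiag : Hᵀ * (Bᵀ * A * B) * H = Matrix.diagonal lam)
    (hpos : ∀ j : Fin (2 * d - 1), (j : ℕ) < r → 0 < lam j)
    (hzero : ∀ j : Fin (2 * d - 1), r ≤ (j : ℕ) → lam j = 0)
    (b : Fin (2 * d - 1) → ℝ) (hb : b = Matrix.vecMul μ' (A * B * H))
    (κ : ℝ)
    (hκ : κ = μ' ⬝ᵥ A.mulVec μ' - ∑ j : Fin (2 * d - 1), if (j : ℕ) < r then b j ^ 2 / lam j else 0) :
    μ.map (fun ω => W ω ⬝ᵥ A.mulVec (W ω)) =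
      (stdGaussian (Fin (2 * d - 1))).map
        (fun y =>
          (∑ j : Fin (2 * d - 1), if (j : ℕ) < r then lam j * (y j + b j / lam j) ^ 2 else 2 * b j * y j)
            + κ) := by
  set V := B * H
  have hVVt : V * Vᵀ = S := by
    rw [transpose_mul, Matrix.mul_assoc, ← Matrix.mul_assoc H, hH2, Matrix.one_mul, hB1]
  have hVtV : Vᵀ * Vᵀᵀ = 1 := by
    rw [transpose_transpose, transpose_mul, Matrix.mul_assoc, ← Matrix.mul_assoc Bᵀ, hB2,
      Matrix.one_mul, hH1]
  have hVdiag : Vᵀ * A * V = diagonal lam := by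
    simp only [← hdiag, V, transpose_mul, Matrix.mul_assoc]
  have hbV : μ' ᵥ* (A * V) = b := by rw [hb, Matrix.mul_assoc]
  have hform (y : Fin (2 * d) → ℝ) : (S *ᵥ y + μ') ⬝ᵥ A *ᵥ (S *ᵥ y + μ') =
      (∑ j : Fin (2 * d - 1), if (j : ℕ) < r then lam j * ((Vᵀ *ᵥ y) j + b j / lam j) ^ 2
        else 2 * b j * (Vᵀ *ᵥ y) j) + κ := by
    rw [← hVVt, ← mulVec_mulVec,
      dotProduct_mulVec_affine_eq_of_diagonal (isHermitian_iff_isSymm.mp hA.isHermitian) hVdiag,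
      sum_mul_sq_add_two_dotProduct_eq_completeSquare (fun j : Fin (2 * d - 1) => (j : ℕ) < r)
        (fun j hj => (hpos j hj).ne') (fun j hj => hzero j (not_lt.mp hj)), hκ, hbV]
    ring
  have hWm : AEMeasurable W μ :=
    .of_map_ne_zero (hW ▸ (Measure.isProbabilityMeasure_map (by fun_prop)).ne_zero)
  have hFm : Measurable fun y : Fin (2 * d - 1) → ℝ => (∑ j : Fin (2 * d - 1),
      if (j : ℕ) < r then lam j * (y j + b j / lam j) ^ 2 else 2 * b j * y j) + κ := by
    refine .add_const (Finset.measurable_sum _ fun j _ => ?_) _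
    split_ifs <;> fun_prop
  change μ.map ((fun w => w ⬝ᵥ A *ᵥ w) ∘ W) = _
  rw [← stdGaussian_map_mulVec Vᵀ hVtV, Measure.map_map hFm (by fun_prop),
    ← AEMeasurable.map_map_of_aemeasurable (by fun_prop) hWm, hW,
    Measure.map_map (by fun_prop) (by fun_prop)]
  exact congrArg (Measure.map · _) (funext hform)

/-- For `W ~ N(μ', Σ')` with `Σ'` symmetric idempotent of rank
`2d−1`, `A` positive semi-definite, `Σ' = BBᵀ` with `BᵀB = I`, `H` orthogonal
diagonalizing `BᵀAB` with eigenvalues `λ₁ ≥ … ≥ λ_r > 0 = λ_{r+1} = … = λ_{2d−1}`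
and `bᵀ = μ'ᵀABH`, the quadratic form `WᵀAW` is distributed as
`∑_{j≤r} λⱼ χ²_{1,j}((bⱼ/λⱼ)²) + N(κ, ∑_{j>r} 4bⱼ²)` with
`κ = μ'ᵀAμ' − ∑_{j≤r} bⱼ²/λⱼ`, the noncentral chi-squared terms and the Gaussian
term being independent.  This mixture is encoded as the pushforward of a
standard Gaussian `y ~ N(0, I_{2d−1})` under
`y ↦ ∑_{j<r} λⱼ (yⱼ + bⱼ/λⱼ)² + ∑_{j≥r} 2 bⱼ yⱼ + κ`, and `N(μ', Σ')` (with `Σ'`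
symmetric idempotent) as the law of `Σ'·y + μ'`. -/
theorem stmt_14 {Ω : Type*} [MeasurableSpace Ω] (μ : Measure Ω) [IsProbabilityMeasure μ]
    (d r : ℕ) (hd : 0 < d) (hr : r ≤ 2 * d - 1)
    (S : Matrix (Fin (2 * d)) (Fin (2 * d)) ℝ) (hsym : S.IsSymm) (hidem : S * S = S)
    (hrank : S.rank = 2 * d - 1)
    (A : Matrix (Fin (2 * d)) (Fin (2 * d)) ℝ) (hA : A.PosSemidef)
    (μ' : Fin (2 * d) → ℝ) (W : Ω → Fin (2 * d) → ℝ)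
    (hW : μ.map W = (stdGaussian (Fin (2 * d))).map fun y => S.mulVec y + μ')
    (B : Matrix (Fin (2 * d)) (Fin (2 * d - 1)) ℝ) (hB1 : B * Bᵀ = S) (hB2 : Bᵀ * B = 1)
    (H : Matrix (Fin (2 * d - 1)) (Fin (2 * d - 1)) ℝ)
    (hH1 : Hᵀ * H = 1) (hH2 : H * Hᵀ = 1)
    (lam : Fin (2 * d - 1) → ℝ)
    (hdiag : Hᵀ * (Bᵀ * A * B) * H = Matrix.diagonal lam)
    (hmono : Antitone lam)
    (hpos : ∀ j : Fin (2 * d - 1), (j : ℕ) < r → 0 < lam j)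
    (hzero : ∀ j : Fin (2 * d - 1), r ≤ (j : ℕ) → lam j = 0)
    (b : Fin (2 * d - 1) → ℝ) (hb : b = Matrix.vecMul μ' (A * B * H))
    (κ : ℝ)
    (hκ : κ = μ' ⬝ᵥ A.mulVec μ' - ∑ j : Fin (2 * d - 1), if (j : ℕ) < r then b j ^ 2 / lam j else 0) :
    μ.map (fun ω => W ω ⬝ᵥ A.mulVec (W ω)) =
      (stdGaussian (Fin (2 * d - 1))).map
        (fun y =>
          (∑ j : Fin (2 * d - 1), if (j : ℕ) < r then lam j * (y j + b j / lam j) ^ 2 else 2 * b j * y j)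
            + κ) :=
  stmt_14_general μ d r S A hA μ' W hW B hB1 hB2 H hH1 hH2 lam hdiag hpos hzero b hb κ hκ
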